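/- arXiv:2403.14032 — 2 statements merged into one kernel-verified Lean document; each statement's English description precedes it below -/
import Mathlib

section
/- Let P be an hNRMI with τ̃_2 < ∞, base measure H, and concentration parameter a. For any measurable A, E[P(A)] = H(A) and Var(P(A)) = H(A)(1−H(A))·I_a, where I_a = a ∫_0^∞ λ exp{−a∫_0^∞(1−e^{−λs})ρ(ds)} (∫_0^∞ s² e^{−λs} ρ(ds)) dλ. Moreover I_a = O(1/a) as a → ∞. -/
/-!
Write `ψ(l) = ∫ (1 - e^{-ls}) ρ(ds)` and `τ_k(l) = ∫ s^k e^{-ls} ρ(ds)`, so that `ψ' = τ₁` and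
`τ₁' = -τ₂` on `(0, ∞)`, and `μ̃_a(B)` has Laplace transform `e^{-a H(B) ψ}`. Put `X = μ̃_a(A)`,
`Y = μ̃_a(Aᶜ)`: they are independent, and `X + Y = μ̃_a(𝕏) > 0` a.s. because its Laplace transform
tends to `0` (`ψ(∞) = ρ((0, ∞)) = ∞`). By `(x/(x+y))^{k+1} = ∫_0^∞ l^k/k! x^{k+1} e^{-l(x+y)} dl`,
Tonelli and independence, the moments of `P(A) = X/(X+Y)` become `l`-integrals of derivatives of the
Laplace transforms of `X` and `Y`:
`E[P(A)] = H(A) ∫_0^∞ -(e^{-aψ})' = H(A)` and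
`E[P(A)²] = H(A) I_a + H(A)² ∫_0^∞ l (aτ₁)² e^{-aψ}`, where integration by parts gives
`I_a + ∫_0^∞ l (aτ₁)² e^{-aψ} = ∫_0^∞ l (e^{-aψ})'' = 1`.

For `I_a = O(1/a)`, split at `l = 1`: on `(0, 1]`, `τ₂(l) ≤ τ₂(0)` and, by concavity,
`ψ(l) ≥ l ψ(1)`, so that part is at most `τ₂(0) / (a ψ(1)²)`; on `(1, ∞)` it is bounded by the
boundary term `(a τ₁(1) + 1) e^{-a ψ(1)}` of the integration by parts, which decays exponentially.
-/

open MeasureTheory Set Filter Real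

open ProbabilityTheory

open scoped Nat Topology

namespace NRMI

lemma pow_mul_exp_neg_mul_le (k : ℕ) {c x : ℝ} (hc : 0 < c) (hx : 0 ≤ x) :
    x ^ k * exp (-(c * x)) ≤ k ! / c ^ k := by
  have h := pow_div_factorial_le_exp (c * x) (mul_nonneg hc.le hx) k
  rw [div_le_iff₀ (by positivity)] at h
  rw [le_div_iff₀ (by positivity), exp_neg]
  calc x ^ k * (exp (c * x))⁻¹ * c ^ k = (c * x) ^ k * (exp (c * x))⁻¹ := by ring
    _ ≤ exp (c * x) * k ! * (exp (c * x))⁻¹ := by gcongr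
    _ = k ! := by field_simp

lemma mul_exp_neg_le_one_sub_exp_neg (u : ℝ) : u * exp (-u) ≤ 1 - exp (-u) := by
  have h : (u + 1) * exp (-u) ≤ 1 := by
    calc (u + 1) * exp (-u) ≤ exp u * exp (-u) := by gcongr; exact add_one_le_exp u
      _ = 1 := by rw [← exp_add, add_neg_cancel, exp_zero]
  linarith

lemma mul_one_sub_exp_neg_le {t u : ℝ} (ht₀ : 0 ≤ t) (ht₁ : t ≤ 1) :
    t * (1 - exp (-u)) ≤ 1 - exp (-(t * u)) := by
  have h := convexOn_exp.2 (mem_univ (-u)) (mem_univ 0) ht₀ (sub_nonneg.2 ht₁)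
    (add_sub_cancel t 1)
  simp only [smul_eq_mul, mul_zero, add_zero, exp_zero, mul_one, mul_neg] at h
  linarith

lemma exp_neg_mul_le_one {l s : ℝ} (hl : 0 ≤ l) (hs : 0 ≤ s) : exp (-(l * s)) ≤ 1 :=
  exp_le_one_iff.2 (by nlinarith)

lemma exp_neg_mul_mul_exp_neg_mul {a p q : ℝ} (hpq : p + q = 1) (t : ℝ) :
    exp (-(a * p * t)) * exp (-(a * q * t)) = exp (-(a * t)) := by
  rw [← exp_add]
  congr 1
  linear_combination (-(a * t)) * hpq

lemma integral_pow_mul_exp_neg_mul_Ioi (k : ℕ) {c : ℝ} (hc : 0 < c) :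
    ∫ l in Ioi 0, l ^ k * exp (-(c * l)) = k ! / c ^ (k + 1) := by
  have key := integral_rpow_mul_exp_neg_mul_Ioi (a := k + 1) (by positivity) hc
  rw [add_sub_cancel_right, Gamma_nat_eq_factorial, one_div, inv_rpow hc.le] at key
  simp only [rpow_natCast] at key
  rw [key, ← Nat.cast_succ, rpow_natCast, div_eq_inv_mul]

lemma integrableOn_pow_mul_exp_neg_mul_Ioi (k : ℕ) {c : ℝ} (hc : 0 < c) :
    IntegrableOn (fun l => l ^ k * exp (-(c * l))) (Ioi 0) :=
  .of_integral_ne_zero (by rw [integral_pow_mul_exp_neg_mul_Ioi k hc]; positivity)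

lemma ofReal_div_add_pow_eq_lintegral {x y : ℝ} (hx : 0 ≤ x) (hy : 0 ≤ y) (k : ℕ) :
    ENNReal.ofReal ((x / (x + y)) ^ (k + 1)) = ∫⁻ l in Ioi 0,
      ENNReal.ofReal (l ^ k / k ! * (x ^ (k + 1) * exp (-(l * x)) * exp (-(l * y)))) := by
  rcases hx.eq_or_lt with rfl | hx
  · simp
  have hd : 0 < x + y := by linarith
  have hint := (integrableOn_pow_mul_exp_neg_mul_Ioi k hd).const_mul (x ^ (k + 1) / k !)
  calc ENNReal.ofReal ((x / (x + y)) ^ (k + 1))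
      = ENNReal.ofReal (∫ l in Ioi 0, x ^ (k + 1) / k ! * (l ^ k * exp (-((x + y) * l)))) := by
        rw [integral_const_mul, integral_pow_mul_exp_neg_mul_Ioi k hd, div_pow]
        field_simp
    _ = _ := by
        rw [ofReal_integral_eq_lintegral_ofReal hint
          ((ae_restrict_iff' measurableSet_Ioi).2 (ae_of_all _ fun l hl => by
            have : 0 ≤ l := le_of_lt hl
            positivity))]
        refine lintegral_congr fun l => congrArg ENNReal.ofReal ?_
        rw [mul_assoc (x ^ (k + 1)), ← exp_add]
        ring_nf

section LaplaceTransform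

variable {α : Type*} [MeasurableSpace α] {ν : Measure α} {X : α → ℝ}

lemma integrable_pow_mul_exp_neg_mul [IsFiniteMeasure ν] (hX : Measurable X)
    (hX₀ : ∀ a, 0 ≤ X a) (k : ℕ) {c : ℝ} (hc : 0 < c) :
    Integrable (fun a => X a ^ k * exp (-(c * X a))) ν := by
  refine (integrable_const ((k ! : ℝ) / c ^ k)).mono' (by fun_prop) (ae_of_all _ fun a => ?_)
  rw [Real.norm_of_nonneg (by have := hX₀ a; positivity)]
  exact pow_mul_exp_neg_mul_le k hc (hX₀ a)

lemma hasDerivAt_integral_pow_mul_exp_neg (hX : Measurable X) (hX₀ : ∀ᵐ a ∂ν, 0 ≤ X a)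
    (k : ℕ) {c l : ℝ} (hcl : c < l)
    (hk : Integrable (fun a => X a ^ k * exp (-(c * X a))) ν)
    (hk₁ : Integrable (fun a => X a ^ (k + 1) * exp (-(c * X a))) ν) :
    HasDerivAt (fun x => ∫ a, X a ^ k * exp (-(x * X a)) ∂ν)
      (-∫ a, X a ^ (k + 1) * exp (-(l * X a)) ∂ν) l := by
  have hball : Metric.ball l (l - c) ∈ 𝓝 l := Metric.ball_mem_nhds l (sub_pos.2 hcl)
  have hexp : ∀ᵐ a ∂ν, ∀ x ∈ Metric.ball l (l - c),
      0 ≤ X a ∧ exp (-(x * X a)) ≤ exp (-(c * X a)) := by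
    filter_upwards [hX₀] with a ha x hx
    rw [Metric.mem_ball, Real.dist_eq, abs_lt] at hx
    exact ⟨ha, exp_le_exp.2 (by nlinarith)⟩
  have hFl : Integrable (fun a => X a ^ k * exp (-(l * X a))) ν := by
    refine hk.mono' (by fun_prop) ?_
    filter_upwards [hexp] with a ha
    obtain ⟨h₀, hle⟩ := ha l (Metric.mem_ball_self (sub_pos.2 hcl))
    rw [Real.norm_of_nonneg (by positivity)]
    gcongr
  have key := hasDerivAt_integral_of_dominated_loc_of_deriv_le hball
    (F := fun x a => X a ^ k * exp (-(x * X a)))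
    (F' := fun x a => -(X a ^ (k + 1) * exp (-(x * X a))))
    (Eventually.of_forall fun x => by fun_prop) hFl (by fun_prop) ?_ hk₁ ?_
  · rw [← integral_neg]
    exact key.2
  · filter_upwards [hexp] with a ha x hx
    obtain ⟨h₀, hle⟩ := ha x hx
    rw [norm_neg, Real.norm_of_nonneg (by positivity)]
    gcongr
  · refine ae_of_all _ fun a x _ => ?_
    have h : HasDerivAt (fun y => -(y * X a)) (-X a) x := (hasDerivAt_mul_const (X a)).neg
    exact (h.exp.const_mul (X a ^ k)).congr_deriv (by ring)

end LaplaceTransform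

noncomputable def laplaceExponent (ρ : Measure ℝ) (l : ℝ) : ℝ :=
  ∫ s in Ioi 0, (1 - exp (-(l * s))) ∂ρ

noncomputable def tiltedMoment (ρ : Measure ℝ) (k : ℕ) (l : ℝ) : ℝ :=
  ∫ s in Ioi 0, s ^ k * exp (-(l * s)) ∂ρ

section LevyIntensity

variable {ρ : Measure ℝ}

lemma integrableOn_pow_mul_exp_neg {k : ℕ} (hk : IntegrableOn (fun s => s ^ k) (Ioi 0) ρ)
    {l : ℝ} (hl : 0 ≤ l) : IntegrableOn (fun s => s ^ k * exp (-(l * s))) (Ioi 0) ρ := by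
  refine hk.mono' (by fun_prop)
    ((ae_restrict_iff' measurableSet_Ioi).2 (ae_of_all _ fun s hs => ?_))
  have hs : 0 ≤ s := le_of_lt hs
  rw [Real.norm_of_nonneg (by positivity)]
  exact mul_le_of_le_one_right (by positivity) (exp_neg_mul_le_one hl hs)

lemma integrableOn_one_sub_exp_neg (h₁ : IntegrableOn (fun s => s) (Ioi 0) ρ) {l : ℝ}
    (hl : 0 ≤ l) : IntegrableOn (fun s => 1 - exp (-(l * s))) (Ioi 0) ρ := by
  refine (h₁.const_mul l).mono' (by fun_prop)
    ((ae_restrict_iff' measurableSet_Ioi).2 (ae_of_all _ fun s hs => ?_))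
  rw [Real.norm_of_nonneg (sub_nonneg.2 (exp_neg_mul_le_one hl (le_of_lt hs)))]
  linarith [one_sub_le_exp_neg (l * s)]

@[simp]
lemma laplaceExponent_zero : laplaceExponent ρ 0 = 0 := by
  simp [laplaceExponent]

lemma laplaceExponent_nonneg {l : ℝ} (hl : 0 ≤ l) : 0 ≤ laplaceExponent ρ l :=
  setIntegral_nonneg measurableSet_Ioi fun _ hs =>
    sub_nonneg.2 (exp_neg_mul_le_one hl (le_of_lt hs))

lemma tiltedMoment_nonneg (k : ℕ) (l : ℝ) : 0 ≤ tiltedMoment ρ k l :=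
  setIntegral_nonneg measurableSet_Ioi fun s hs => by
    have : 0 ≤ s := le_of_lt hs
    positivity

lemma laplaceExponent_le_mul (h₁ : IntegrableOn (fun s => s) (Ioi 0) ρ) {l : ℝ} (hl : 0 ≤ l) :
    laplaceExponent ρ l ≤ l * ∫ s in Ioi 0, s ∂ρ := by
  rw [← integral_const_mul]
  exact setIntegral_mono_on (integrableOn_one_sub_exp_neg h₁ hl) (h₁.const_mul l)
    measurableSet_Ioi fun s _ => by linarith [one_sub_le_exp_neg (l * s)]

lemma mul_tiltedMoment_one_le (h₁ : IntegrableOn (fun s => s) (Ioi 0) ρ) {l : ℝ} (hl : 0 ≤ l) :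
    l * tiltedMoment ρ 1 l ≤ laplaceExponent ρ l := by
  rw [tiltedMoment, ← integral_const_mul]
  refine setIntegral_mono_on ((integrableOn_pow_mul_exp_neg (by simpa using h₁) hl).const_mul l)
    (integrableOn_one_sub_exp_neg h₁ hl) measurableSet_Ioi fun s _ => ?_
  calc l * (s ^ 1 * exp (-(l * s))) = l * s * exp (-(l * s)) := by ring
    _ ≤ 1 - exp (-(l * s)) := mul_exp_neg_le_one_sub_exp_neg _

lemma mul_laplaceExponent_one_le (h₁ : IntegrableOn (fun s => s) (Ioi 0) ρ) {t : ℝ}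
    (ht₀ : 0 ≤ t) (ht₁ : t ≤ 1) : t * laplaceExponent ρ 1 ≤ laplaceExponent ρ t := by
  rw [laplaceExponent, ← integral_const_mul]
  refine setIntegral_mono_on ((integrableOn_one_sub_exp_neg h₁ zero_le_one).const_mul t)
    (integrableOn_one_sub_exp_neg h₁ ht₀) measurableSet_Ioi fun s _ => ?_
  simpa only [one_mul] using mul_one_sub_exp_neg_le (u := s) ht₀ ht₁

lemma monotoneOn_laplaceExponent (h₁ : IntegrableOn (fun s => s) (Ioi 0) ρ) :
    MonotoneOn (laplaceExponent ρ) (Ici 0) := fun l hl l' hl' hll' =>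
  setIntegral_mono_on (integrableOn_one_sub_exp_neg h₁ hl) (integrableOn_one_sub_exp_neg h₁ hl')
    measurableSet_Ioi fun s hs => by
      have : l * s ≤ l' * s := mul_le_mul_of_nonneg_right hll' (le_of_lt hs)
      gcongr

lemma tiltedMoment_le_tiltedMoment_zero {k : ℕ} (hk : IntegrableOn (fun s => s ^ k) (Ioi 0) ρ)
    {l : ℝ} (hl : 0 ≤ l) : tiltedMoment ρ k l ≤ tiltedMoment ρ k 0 :=
  setIntegral_mono_on (integrableOn_pow_mul_exp_neg hk hl) (integrableOn_pow_mul_exp_neg hk le_rfl)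
    measurableSet_Ioi fun s hs => by
      have : 0 ≤ s := le_of_lt hs
      gcongr

lemma hasDerivAt_laplaceExponent (h₁ : IntegrableOn (fun s => s) (Ioi 0) ρ) {l : ℝ} (hl : 0 < l) :
    HasDerivAt (laplaceExponent ρ) (tiltedMoment ρ 1 l) l := by
  have key := hasDerivAt_integral_of_dominated_loc_of_deriv_le (Metric.ball_mem_nhds l hl)
    (F := fun x s => 1 - exp (-(x * s))) (F' := fun x s => s ^ 1 * exp (-(x * s)))
    (μ := ρ.restrict (Ioi 0)) (bound := fun s => s)
    (Eventually.of_forall fun x => by fun_prop) (integrableOn_one_sub_exp_neg h₁ hl.le)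
    (by fun_prop) ?_ h₁ ?_
  · exact key.2
  · refine (ae_restrict_iff' measurableSet_Ioi).2 (ae_of_all _ fun s hs x hx => ?_)
    rw [Metric.mem_ball, Real.dist_eq, abs_lt] at hx
    have hs : 0 ≤ s := le_of_lt hs
    rw [pow_one, Real.norm_of_nonneg (by positivity)]
    exact mul_le_of_le_one_right hs (exp_neg_mul_le_one (by linarith) hs)
  · refine ae_of_all _ fun s x _ => ?_
    have h : HasDerivAt (fun y => -(y * s)) (-s) x := (hasDerivAt_mul_const s).neg
    exact (h.exp.const_sub 1).congr_deriv (by ring)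

lemma hasDerivAt_tiltedMoment {k : ℕ} (hk : IntegrableOn (fun s => s ^ k) (Ioi 0) ρ)
    (hk₁ : IntegrableOn (fun s => s ^ (k + 1)) (Ioi 0) ρ) {l : ℝ} (hl : 0 < l) :
    HasDerivAt (tiltedMoment ρ k) (-tiltedMoment ρ (k + 1) l) l :=
  hasDerivAt_integral_pow_mul_exp_neg measurable_id
    ((ae_restrict_iff' measurableSet_Ioi).2 (ae_of_all _ fun s hs => le_of_lt hs)) k hl
    (by simpa [IntegrableOn] using hk) (by simpa [IntegrableOn] using hk₁)

lemma continuousOn_tiltedMoment {k : ℕ} (hk : IntegrableOn (fun s => s ^ k) (Ioi 0) ρ) :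
    ContinuousOn (tiltedMoment ρ k) (Ici 0) := by
  refine continuousOn_of_dominated (fun _ _ => by fun_prop) (fun l hl => ?_) hk
    (ae_of_all _ fun s => by fun_prop)
  refine (ae_restrict_iff' measurableSet_Ioi).2 (ae_of_all _ fun s hs => ?_)
  have hs : 0 ≤ s := le_of_lt hs
  rw [Real.norm_of_nonneg (by positivity)]
  exact mul_le_of_le_one_right (by positivity) (exp_neg_mul_le_one hl hs)

lemma tendsto_laplaceExponent_nhdsWithin_zero (h₁ : IntegrableOn (fun s => s) (Ioi 0) ρ) :
    Tendsto (laplaceExponent ρ) (𝓝[Ici 0] 0) (𝓝 0) := by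
  have hlin : Tendsto (fun l : ℝ => l * ∫ s in Ioi 0, s ∂ρ) (𝓝[Ici 0] 0) (𝓝 0) := by
    simpa using ((continuous_mul_const (∫ s in Ioi 0, s ∂ρ)).tendsto 0).mono_left nhdsWithin_le_nhds
  exact squeeze_zero' (eventually_nhdsWithin_of_forall fun l hl => laplaceExponent_nonneg hl)
    (eventually_nhdsWithin_of_forall fun l hl => laplaceExponent_le_mul h₁ hl) hlin

lemma continuousOn_laplaceExponent (h₁ : IntegrableOn (fun s => s) (Ioi 0) ρ) :
    ContinuousOn (laplaceExponent ρ) (Ici 0) := by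
  intro l hl
  rcases (mem_Ici.1 hl).eq_or_lt with rfl | hl
  · simpa [ContinuousWithinAt] using tendsto_laplaceExponent_nhdsWithin_zero h₁
  · exact (hasDerivAt_laplaceExponent h₁ hl).continuousAt.continuousWithinAt

lemma tendsto_mul_tiltedMoment_one_nhdsWithin_zero (h₁ : IntegrableOn (fun s => s) (Ioi 0) ρ) :
    Tendsto (fun l => l * tiltedMoment ρ 1 l) (𝓝[Ici 0] 0) (𝓝 0) :=
  squeeze_zero'
    (eventually_nhdsWithin_of_forall fun _ hl => mul_nonneg hl (tiltedMoment_nonneg _ _))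
    (eventually_nhdsWithin_of_forall fun _ hl => mul_tiltedMoment_one_le h₁ hl)
    (tendsto_laplaceExponent_nhdsWithin_zero h₁)

lemma laplaceExponent_one_pos (h₁ : IntegrableOn (fun s => s) (Ioi 0) ρ) (hρ : ρ (Ioi 0) ≠ 0) :
    0 < laplaceExponent ρ 1 := by
  have hnn : 0 ≤ᵐ[ρ.restrict (Ioi 0)] fun s => 1 - exp (-(1 * s)) :=
    (ae_restrict_iff' measurableSet_Ioi).2 (ae_of_all _ fun s hs =>
      sub_nonneg.2 (exp_neg_mul_le_one zero_le_one (le_of_lt hs)))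
  rw [laplaceExponent, setIntegral_pos_iff_support_of_nonneg_ae hnn
    (integrableOn_one_sub_exp_neg h₁ zero_le_one)]
  have hsupp : Ioi 0 ⊆ Function.support fun s : ℝ => 1 - exp (-(1 * s)) := fun s hs => by
    simp only [Function.mem_support, one_mul, sub_ne_zero]
    exact (exp_lt_one_iff.2 (neg_lt_zero.2 hs)).ne'
  rwa [inter_eq_right.2 hsupp, pos_iff_ne_zero]

lemma tendsto_laplaceExponent_natCast_atTop (h₁ : IntegrableOn (fun s => s) (Ioi 0) ρ)
    (hρ : ρ (Ioi 0) = ⊤) : Tendsto (fun n : ℕ => laplaceExponent ρ n) atTop atTop := by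
  have hofReal : ∀ n : ℕ, ENNReal.ofReal (laplaceExponent ρ n)
      = ∫⁻ s in Ioi 0, ENNReal.ofReal (1 - exp (-(n * s))) ∂ρ := fun n =>
    ofReal_integral_eq_lintegral_ofReal (integrableOn_one_sub_exp_neg h₁ n.cast_nonneg)
      ((ae_restrict_iff' measurableSet_Ioi).2 (ae_of_all _ fun s hs =>
        sub_nonneg.2 (exp_neg_mul_le_one n.cast_nonneg (le_of_lt hs))))
  rw [← ENNReal.tendsto_ofReal_nhds_top]
  simp_rw [hofReal]
  -- monotone convergence: `1 - e^{-ns} ↑ 1` on `(0, ∞)`, whose mass is infinite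
  have hmct := lintegral_tendsto_of_tendsto_of_monotone (μ := ρ.restrict (Ioi 0))
    (f := fun (n : ℕ) s => ENNReal.ofReal (1 - exp (-(n * s)))) (F := fun _ => 1)
    (fun n => by fun_prop)
    ((ae_restrict_iff' measurableSet_Ioi).2 (ae_of_all _ fun s hs n m hnm => by
      have : (n : ℝ) * s ≤ m * s :=
        mul_le_mul_of_nonneg_right (by exact_mod_cast hnm) (le_of_lt hs)
      dsimp only
      gcongr))
    ((ae_restrict_iff' measurableSet_Ioi).2 (ae_of_all _ fun s hs => by
      have hlim : Tendsto (fun n : ℕ => exp (-(n * s))) atTop (𝓝 0) :=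
        tendsto_exp_neg_atTop_nhds_zero.comp
          (tendsto_natCast_atTop_atTop.atTop_mul_const (mem_Ioi.1 hs))
      simpa using ENNReal.tendsto_ofReal (hlim.const_sub 1)))
  simpa [hρ] using hmct

lemma tendsto_laplaceExponent_atTop (h₁ : IntegrableOn (fun s => s) (Ioi 0) ρ)
    (hρ : ρ (Ioi 0) = ⊤) : Tendsto (laplaceExponent ρ) atTop atTop := by
  refine tendsto_atTop_atTop.2 fun M => ?_
  obtain ⟨N, hN⟩ := tendsto_atTop_atTop.1 (tendsto_laplaceExponent_natCast_atTop h₁ hρ) M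
  exact ⟨N, fun l hl => (hN N le_rfl).trans (monotoneOn_laplaceExponent h₁
    (mem_Ici.2 N.cast_nonneg) (mem_Ici.2 (N.cast_nonneg.trans hl)) hl)⟩

lemma integrableOn_sq_of_lintegral_min_lt_top
    (hmin : ∫⁻ s in Ioi 0, ENNReal.ofReal (min s 1) ∂ρ < ⊤)
    (htail : ∫⁻ s in Ici 1, ENNReal.ofReal (s ^ 2) ∂ρ < ⊤) :
    IntegrableOn (fun s => s ^ 2) (Ioi 0) ρ := by
  refine ⟨by fun_prop, (hasFiniteIntegral_iff_ofReal (ae_of_all _ fun s => sq_nonneg s)).2 ?_⟩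
  have hsmall : ∫⁻ s in Ioc 0 1, ENNReal.ofReal (s ^ 2) ∂ρ
      ≤ ∫⁻ s in Ioi 0, ENNReal.ofReal (min s 1) ∂ρ :=
    (setLIntegral_mono' measurableSet_Ioc fun s hs => by
      rw [min_eq_left hs.2]
      exact ENNReal.ofReal_le_ofReal (by nlinarith [hs.1, hs.2])).trans
      (lintegral_mono_set Ioc_subset_Ioi_self)
  rw [← Ioc_union_Ioi_eq_Ioi zero_le_one, lintegral_union measurableSet_Ioi Ioc_disjoint_Ioi_same]
  exact ENNReal.add_lt_top.2 ⟨hsmall.trans_lt hmin,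
    (lintegral_mono_set Ioi_subset_Ici_self).trans_lt htail⟩

lemma integrableOn_self_of_lintegral_min_lt_top
    (hmin : ∫⁻ s in Ioi 0, ENNReal.ofReal (min s 1) ∂ρ < ⊤)
    (htail : ∫⁻ s in Ici 1, ENNReal.ofReal (s ^ 2) ∂ρ < ⊤) :
    IntegrableOn (fun s => s) (Ioi 0) ρ := by
  have hmin' : IntegrableOn (fun s => min s 1) (Ioi 0) ρ :=
    ⟨by fun_prop, (hasFiniteIntegral_iff_ofReal ((ae_restrict_iff' measurableSet_Ioi).2
      (ae_of_all _ fun s hs => le_min (le_of_lt hs) zero_le_one))).2 hmin⟩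
  refine (hmin'.add (integrableOn_sq_of_lintegral_min_lt_top hmin htail)).mono' (by fun_prop)
    ((ae_restrict_iff' measurableSet_Ioi).2 (ae_of_all _ fun s hs => ?_))
  rw [Real.norm_of_nonneg (le_of_lt hs)]
  rcases le_or_gt s 1 with h | h
  · rw [Pi.add_apply, min_eq_left h]
    nlinarith [sq_nonneg s]
  · rw [Pi.add_apply, min_eq_right h.le]
    nlinarith

end LevyIntensity

noncomputable def firstMomentDensity (ρ : Measure ℝ) (a l : ℝ) : ℝ :=
  a * tiltedMoment ρ 1 l * exp (-(a * laplaceExponent ρ l))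

noncomputable def secondMomentDensity (ρ : Measure ℝ) (a l : ℝ) : ℝ :=
  l * (a * tiltedMoment ρ 2 l + (a * tiltedMoment ρ 1 l) ^ 2) * exp (-(a * laplaceExponent ρ l))

noncomputable def secondMomentPrimitive (ρ : Measure ℝ) (a l : ℝ) : ℝ :=
  -((a * l * tiltedMoment ρ 1 l + 1) * exp (-(a * laplaceExponent ρ l)))

section Antiderivatives

variable {ρ : Measure ℝ} {a : ℝ}

lemma firstMomentDensity_nonneg (ha : 0 ≤ a) (l : ℝ) : 0 ≤ firstMomentDensity ρ a l := by
  have := tiltedMoment_nonneg (ρ := ρ) 1 l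
  unfold firstMomentDensity
  positivity

lemma secondMomentDensity_nonneg (ha : 0 ≤ a) {l : ℝ} (hl : 0 ≤ l) :
    0 ≤ secondMomentDensity ρ a l := by
  have := tiltedMoment_nonneg (ρ := ρ) 2 l
  unfold secondMomentDensity
  positivity

lemma tendsto_exp_neg_mul_laplaceExponent_atTop (h₁ : IntegrableOn (fun s => s) (Ioi 0) ρ)
    (hρ : ρ (Ioi 0) = ⊤) (ha : 0 < a) :
    Tendsto (fun l => exp (-(a * laplaceExponent ρ l))) atTop (𝓝 0) :=
  tendsto_exp_neg_atTop_nhds_zero.comp ((tendsto_laplaceExponent_atTop h₁ hρ).const_mul_atTop ha)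

lemma hasDerivAt_exp_neg_mul_laplaceExponent (h₁ : IntegrableOn (fun s => s) (Ioi 0) ρ)
    {l : ℝ} (hl : 0 < l) :
    HasDerivAt (fun x => exp (-(a * laplaceExponent ρ x))) (-firstMomentDensity ρ a l) l := by
  have h : HasDerivAt (fun x => -(a * laplaceExponent ρ x)) (-(a * tiltedMoment ρ 1 l)) l :=
    ((hasDerivAt_laplaceExponent h₁ hl).const_mul a).neg
  exact h.exp.congr_deriv (by unfold firstMomentDensity; ring)

lemma integrableOn_firstMomentDensity_and_integral_eq_one
    (h₁ : IntegrableOn (fun s => s) (Ioi 0) ρ) (hρ : ρ (Ioi 0) = ⊤) (ha : 0 < a) :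
    IntegrableOn (firstMomentDensity ρ a) (Ioi 0) ∧ ∫ l in Ioi 0, firstMomentDensity ρ a l = 1 := by
  have hcont : ContinuousWithinAt (fun l => -exp (-(a * laplaceExponent ρ l))) (Ici 0) 0 :=
    ((continuousOn_laplaceExponent h₁ 0 self_mem_Ici).const_mul a).neg.rexp.neg
  have hderiv : ∀ l ∈ Ioi (0 : ℝ),
      HasDerivAt (fun l => -exp (-(a * laplaceExponent ρ l))) (firstMomentDensity ρ a l) l :=
    fun _ hl => (hasDerivAt_exp_neg_mul_laplaceExponent h₁ hl).neg.congr_deriv (neg_neg _)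
  have hnonneg : ∀ l ∈ Ioi (0 : ℝ), 0 ≤ firstMomentDensity ρ a l :=
    fun l _ => firstMomentDensity_nonneg ha.le l
  have hlim : Tendsto (fun l => -exp (-(a * laplaceExponent ρ l))) atTop (𝓝 0) := by
    simpa using (tendsto_exp_neg_mul_laplaceExponent_atTop h₁ hρ ha).neg
  refine ⟨integrableOn_Ioi_deriv_of_nonneg hcont hderiv hnonneg hlim, ?_⟩
  rw [integral_Ioi_of_hasDerivAt_of_nonneg hcont hderiv hnonneg hlim]
  simp

lemma hasDerivAt_secondMomentPrimitive (h₁ : IntegrableOn (fun s => s) (Ioi 0) ρ)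
    (h₂ : IntegrableOn (fun s => s ^ 2) (Ioi 0) ρ) {l : ℝ} (hl : 0 < l) :
    HasDerivAt (secondMomentPrimitive ρ a) (secondMomentDensity ρ a l) l := by
  have hτ := hasDerivAt_tiltedMoment (k := 1) (by simpa using h₁) h₂ hl
  have hlin : HasDerivAt (fun x => a * x * tiltedMoment ρ 1 x + 1)
      (a * (1 * tiltedMoment ρ 1 l + l * -tiltedMoment ρ 2 l)) l := by
    have h := (((hasDerivAt_id l).mul hτ).const_mul a).add_const 1
    simp only [id, mul_assoc] at h ⊢
    exact h
  have h := hlin.mul (hasDerivAt_exp_neg_mul_laplaceExponent (a := a) h₁ hl)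
  exact h.neg.congr_deriv (by unfold firstMomentDensity secondMomentDensity; ring)

lemma continuousOn_secondMomentPrimitive (h₁ : IntegrableOn (fun s => s) (Ioi 0) ρ)
    (h₂ : IntegrableOn (fun s => s ^ 2) (Ioi 0) ρ) :
    ContinuousOn (secondMomentPrimitive ρ a) (Ici 0) := by
  intro l hl
  rcases (mem_Ici.1 hl).eq_or_lt with rfl | hl
  · have hlin : Tendsto (fun x => a * x * tiltedMoment ρ 1 x + 1) (𝓝[Ici 0] 0) (𝓝 1) := by
      simpa [mul_assoc] using
        ((tendsto_mul_tiltedMoment_one_nhdsWithin_zero h₁).const_mul a).add_const 1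
    have hexp : Tendsto (fun x => exp (-(a * laplaceExponent ρ x))) (𝓝[Ici 0] 0) (𝓝 1) := by
      simpa using ((tendsto_laplaceExponent_nhdsWithin_zero h₁).const_mul a).neg.rexp
    unfold secondMomentPrimitive
    simpa [ContinuousWithinAt] using (hlin.mul hexp).neg
  · exact (hasDerivAt_secondMomentPrimitive h₁ h₂ hl).continuousAt.continuousWithinAt

lemma tendsto_secondMomentPrimitive_atTop (h₁ : IntegrableOn (fun s => s) (Ioi 0) ρ)
    (hρ : ρ (Ioi 0) = ⊤) (ha : 0 < a) :
    Tendsto (secondMomentPrimitive ρ a) atTop (𝓝 0) := by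
  have hψ := (tendsto_laplaceExponent_atTop h₁ hρ).const_mul_atTop ha
  -- `0 ≤ a l τ₁(l) e^{-aψ(l)} ≤ aψ(l) e^{-aψ(l)} → 0`
  have hmain : Tendsto (fun x => a * x * tiltedMoment ρ 1 x * exp (-(a * laplaceExponent ρ x)))
      atTop (𝓝 0) := by
    refine squeeze_zero'
      (g := fun x => a * laplaceExponent ρ x * exp (-(a * laplaceExponent ρ x))) ?_ ?_
      (by simpa [Function.comp_def] using (tendsto_pow_mul_exp_neg_atTop_nhds_zero 1).comp hψ)
    · filter_upwards [eventually_ge_atTop 0] with x hx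
      have := tiltedMoment_nonneg (ρ := ρ) 1 x
      positivity
    · filter_upwards [eventually_ge_atTop 0] with x hx
      rw [mul_assoc a]
      gcongr
      exact mul_tiltedMoment_one_le h₁ hx
  unfold secondMomentPrimitive
  simpa [add_mul] using (hmain.add (tendsto_exp_neg_mul_laplaceExponent_atTop h₁ hρ ha)).neg

lemma integrableOn_secondMomentDensity (h₁ : IntegrableOn (fun s => s) (Ioi 0) ρ)
    (h₂ : IntegrableOn (fun s => s ^ 2) (Ioi 0) ρ) (hρ : ρ (Ioi 0) = ⊤) (ha : 0 < a) :
    IntegrableOn (secondMomentDensity ρ a) (Ioi 0) :=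
  integrableOn_Ioi_deriv_of_nonneg (continuousOn_secondMomentPrimitive h₁ h₂ 0 self_mem_Ici)
    (fun _ hl => hasDerivAt_secondMomentPrimitive h₁ h₂ hl)
    (fun _ hl => secondMomentDensity_nonneg ha.le (le_of_lt hl))
    (tendsto_secondMomentPrimitive_atTop h₁ hρ ha)

lemma integral_Ioi_secondMomentDensity (h₁ : IntegrableOn (fun s => s) (Ioi 0) ρ)
    (h₂ : IntegrableOn (fun s => s ^ 2) (Ioi 0) ρ) (hρ : ρ (Ioi 0) = ⊤) (ha : 0 < a) {b : ℝ}
    (hb : 0 ≤ b) :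
    ∫ l in Ioi b, secondMomentDensity ρ a l
      = (a * b * tiltedMoment ρ 1 b + 1) * exp (-(a * laplaceExponent ρ b)) := by
  rw [integral_Ioi_of_hasDerivAt_of_nonneg
    ((continuousOn_secondMomentPrimitive h₁ h₂).mono (Ici_subset_Ici.2 hb) b self_mem_Ici)
    (fun _ hl => hasDerivAt_secondMomentPrimitive h₁ h₂ (hb.trans_lt hl))
    (fun _ hl => secondMomentDensity_nonneg ha.le (hb.trans (le_of_lt hl)))
    (tendsto_secondMomentPrimitive_atTop h₁ hρ ha), secondMomentPrimitive]
  ring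

end Antiderivatives

noncomputable def varianceFactor (ρ : Measure ℝ) (a : ℝ) : ℝ :=
  a * ∫ l in Ioi 0, l * exp (-(a * laplaceExponent ρ l)) * tiltedMoment ρ 2 l

section VarianceFactor

variable {ρ : Measure ℝ} {a : ℝ}

lemma mul_le_secondMomentDensity {l : ℝ} (hl : 0 ≤ l) :
    a * (l * exp (-(a * laplaceExponent ρ l)) * tiltedMoment ρ 2 l)
      ≤ secondMomentDensity ρ a l := by
  have : 0 ≤ l * (a * tiltedMoment ρ 1 l) ^ 2 * exp (-(a * laplaceExponent ρ l)) := by positivity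
  unfold secondMomentDensity
  linarith

lemma integrableOn_mul_exp_neg_mul_tiltedMoment_two
    (h₁ : IntegrableOn (fun s => s) (Ioi 0) ρ) (h₂ : IntegrableOn (fun s => s ^ 2) (Ioi 0) ρ)
    (hρ : ρ (Ioi 0) = ⊤) (ha : 0 < a) :
    IntegrableOn (fun l => l * exp (-(a * laplaceExponent ρ l)) * tiltedMoment ρ 2 l) (Ioi 0) := by
  have hcont : ContinuousOn
      (fun l => l * exp (-(a * laplaceExponent ρ l)) * tiltedMoment ρ 2 l) (Ioi 0) :=
    (continuousOn_id.mul ((continuousOn_laplaceExponent h₁).mono Ioi_subset_Ici_self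
      |>.const_smul a |>.neg |>.rexp)).mul
      ((continuousOn_tiltedMoment h₂).mono Ioi_subset_Ici_self)
  refine ((integrableOn_secondMomentDensity h₁ h₂ hρ ha).const_mul a⁻¹).mono'
    (hcont.aestronglyMeasurable measurableSet_Ioi)
    ((ae_restrict_iff' measurableSet_Ioi).2 (ae_of_all _ fun l hl => ?_))
  have hl : 0 ≤ l := le_of_lt hl
  have := tiltedMoment_nonneg (ρ := ρ) 2 l
  rw [Real.norm_of_nonneg (by positivity), ← inv_mul_cancel_left₀ ha.ne' (_ * _ * _)]
  exact mul_le_mul_of_nonneg_left (mul_le_secondMomentDensity hl) (inv_nonneg.2 ha.le)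

lemma varianceFactor_nonneg (ha : 0 ≤ a) : 0 ≤ varianceFactor ρ a :=
  mul_nonneg ha (setIntegral_nonneg measurableSet_Ioi fun l hl => by
    have := tiltedMoment_nonneg (ρ := ρ) 2 l
    have : 0 ≤ l := le_of_lt hl
    positivity)

lemma mul_setIntegral_Ioc_zero_one_le (h₁ : IntegrableOn (fun s => s) (Ioi 0) ρ)
    (h₂ : IntegrableOn (fun s => s ^ 2) (Ioi 0) ρ) (hρ : ρ (Ioi 0) = ⊤) (ha : 0 < a) :
    a * ∫ l in Ioc 0 1, l * exp (-(a * laplaceExponent ρ l)) * tiltedMoment ρ 2 l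
      ≤ tiltedMoment ρ 2 0 / (laplaceExponent ρ 1 ^ 2 * a) := by
  have hψ₁ := laplaceExponent_one_pos h₁ (by simp [hρ])
  have hc : 0 < a * laplaceExponent ρ 1 := mul_pos ha hψ₁
  have hτ₂ := tiltedMoment_nonneg (ρ := ρ) 2 0
  have hf := integrableOn_mul_exp_neg_mul_tiltedMoment_two h₁ h₂ hρ ha
  have hmaj : IntegrableOn
      (fun l => tiltedMoment ρ 2 0 * (l ^ 1 * exp (-(a * laplaceExponent ρ 1 * l)))) (Ioi 0) :=
    (integrableOn_pow_mul_exp_neg_mul_Ioi 1 hc).const_mul _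
  have hpointwise : ∀ l ∈ Ioc (0 : ℝ) 1, l * exp (-(a * laplaceExponent ρ l)) * tiltedMoment ρ 2 l
      ≤ tiltedMoment ρ 2 0 * (l ^ 1 * exp (-(a * laplaceExponent ρ 1 * l))) := by
    intro l ⟨hl₀, hl₁⟩
    have := tiltedMoment_nonneg (ρ := ρ) 2 l
    have := tiltedMoment_le_tiltedMoment_zero h₂ hl₀.le
    have hψ := mul_laplaceExponent_one_le h₁ hl₀.le hl₁
    have : exp (-(a * laplaceExponent ρ l)) ≤ exp (-(a * laplaceExponent ρ 1 * l)) := by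
      rw [mul_assoc, mul_comm _ l]
      gcongr
    calc l * exp (-(a * laplaceExponent ρ l)) * tiltedMoment ρ 2 l
        ≤ l * exp (-(a * laplaceExponent ρ 1 * l)) * tiltedMoment ρ 2 0 := by gcongr
      _ = _ := by ring
  calc a * ∫ l in Ioc 0 1, l * exp (-(a * laplaceExponent ρ l)) * tiltedMoment ρ 2 l
      ≤ a * ∫ l in Ioc 0 1,
          tiltedMoment ρ 2 0 * (l ^ 1 * exp (-(a * laplaceExponent ρ 1 * l))) :=
        mul_le_mul_of_nonneg_left (setIntegral_mono_on (hf.mono_set Ioc_subset_Ioi_self)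
          (hmaj.mono_set Ioc_subset_Ioi_self) measurableSet_Ioc hpointwise) ha.le
    _ ≤ a * ∫ l in Ioi 0, tiltedMoment ρ 2 0 * (l ^ 1 * exp (-(a * laplaceExponent ρ 1 * l))) := by
        refine mul_le_mul_of_nonneg_left (setIntegral_mono_set hmaj
          ((ae_restrict_iff' measurableSet_Ioi).2 (ae_of_all _ fun l hl => ?_))
          Ioc_subset_Ioi_self.eventuallyLE) ha.le
        have : 0 ≤ l := le_of_lt hl
        positivity
    _ = tiltedMoment ρ 2 0 / (laplaceExponent ρ 1 ^ 2 * a) := by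
        rw [integral_const_mul, integral_pow_mul_exp_neg_mul_Ioi 1 hc]
        field_simp
        ring

lemma mul_setIntegral_Ioi_one_le (h₁ : IntegrableOn (fun s => s) (Ioi 0) ρ)
    (h₂ : IntegrableOn (fun s => s ^ 2) (Ioi 0) ρ) (hρ : ρ (Ioi 0) = ⊤) (ha : 0 < a) :
    a * ∫ l in Ioi 1, l * exp (-(a * laplaceExponent ρ l)) * tiltedMoment ρ 2 l
      ≤ (a * tiltedMoment ρ 1 1 + 1) * exp (-(a * laplaceExponent ρ 1)) := by
  have hvalue := integral_Ioi_secondMomentDensity h₁ h₂ hρ ha zero_le_one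
  rw [mul_one] at hvalue
  rw [← integral_const_mul, ← hvalue]
  exact setIntegral_mono_on
    (((integrableOn_mul_exp_neg_mul_tiltedMoment_two h₁ h₂ hρ ha).mono_set
      (Ioi_subset_Ioi zero_le_one)).const_mul a)
    ((integrableOn_secondMomentDensity h₁ h₂ hρ ha).mono_set (Ioi_subset_Ioi zero_le_one))
    measurableSet_Ioi fun l hl => mul_le_secondMomentDensity (zero_le_one.trans hl.le)

lemma varianceFactor_le (h₁ : IntegrableOn (fun s => s) (Ioi 0) ρ)
    (h₂ : IntegrableOn (fun s => s ^ 2) (Ioi 0) ρ) (hρ : ρ (Ioi 0) = ⊤) (ha : 0 < a) :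
    varianceFactor ρ a ≤ tiltedMoment ρ 2 0 / (laplaceExponent ρ 1 ^ 2 * a)
      + (a * tiltedMoment ρ 1 1 + 1) * exp (-(a * laplaceExponent ρ 1)) := by
  have hf := integrableOn_mul_exp_neg_mul_tiltedMoment_two h₁ h₂ hρ ha
  rw [← Ioc_union_Ioi_eq_Ioi zero_le_one] at hf
  rw [varianceFactor, ← Ioc_union_Ioi_eq_Ioi zero_le_one, setIntegral_union Ioc_disjoint_Ioi_same
    measurableSet_Ioi (hf.mono_set subset_union_left) (hf.mono_set subset_union_right), mul_add]
  exact add_le_add (mul_setIntegral_Ioc_zero_one_le h₁ h₂ hρ ha)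
    (mul_setIntegral_Ioi_one_le h₁ h₂ hρ ha)

lemma exists_varianceFactor_le_div (h₁ : IntegrableOn (fun s => s) (Ioi 0) ρ)
    (h₂ : IntegrableOn (fun s => s ^ 2) (Ioi 0) ρ) (hρ : ρ (Ioi 0) = ⊤) :
    ∃ C a₀ : ℝ, 0 < C ∧ ∀ a, a₀ ≤ a → |varianceFactor ρ a| ≤ C / a := by
  set c := laplaceExponent ρ 1
  have hc : 0 < c := laplaceExponent_one_pos h₁ (by simp [hρ])
  have hac : Tendsto (fun a => a * c) atTop atTop := tendsto_id.atTop_mul_const hc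
  have htail : Tendsto (fun a => a * ((a * tiltedMoment ρ 1 1 + 1) * exp (-(a * c))))
      atTop (𝓝 0) := by
    have h := (((tendsto_pow_mul_exp_neg_atTop_nhds_zero 2).comp hac).const_mul
      (tiltedMoment ρ 1 1 / c ^ 2)).add
      (((tendsto_pow_mul_exp_neg_atTop_nhds_zero 1).comp hac).const_mul (1 / c))
    simp only [mul_zero, add_zero] at h
    refine h.congr fun a => ?_
    simp only [Function.comp_apply]
    field_simp
  obtain ⟨a₀, ha₀⟩ := eventually_atTop.1 (htail.eventually (gt_mem_nhds one_pos))
  have hτ₂ := tiltedMoment_nonneg (ρ := ρ) 2 0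
  refine ⟨tiltedMoment ρ 2 0 / c ^ 2 + 1, max a₀ 1, by positivity, fun a ha => ?_⟩
  have ha₁ : 0 < a := one_pos.trans_le ((le_max_right _ _).trans ha)
  have hbound := (ha₀ a ((le_max_left _ _).trans ha)).le
  rw [abs_of_nonneg (varianceFactor_nonneg ha₁.le), le_div_iff₀ ha₁]
  calc varianceFactor ρ a * a
      ≤ (tiltedMoment ρ 2 0 / (c ^ 2 * a) + (a * tiltedMoment ρ 1 1 + 1) * exp (-(a * c))) * a :=
        mul_le_mul_of_nonneg_right (varianceFactor_le h₁ h₂ hρ ha₁) ha₁.le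
    _ = tiltedMoment ρ 2 0 / c ^ 2 + a * ((a * tiltedMoment ρ 1 1 + 1) * exp (-(a * c))) := by
        field_simp
    _ ≤ tiltedMoment ρ 2 0 / c ^ 2 + 1 := by linarith

end VarianceFactor

section RandomVariables

variable {Ω : Type*} [MeasurableSpace Ω] {P : Measure Ω} {X Y : Ω → ℝ}

lemma lintegral_ofReal_div_add_pow [IsFiniteMeasure P] (hX : Measurable X) (hY : Measurable Y)
    (hX₀ : ∀ ω, 0 ≤ X ω) (hY₀ : ∀ ω, 0 ≤ Y ω) (hXY : IndepFun X Y P) (k : ℕ) :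
    ∫⁻ ω, ENNReal.ofReal ((X ω / (X ω + Y ω)) ^ (k + 1)) ∂P = ∫⁻ l in Ioi 0,
      ENNReal.ofReal (l ^ k / k ! *
        ((∫ ω, X ω ^ (k + 1) * exp (-(l * X ω)) ∂P) * ∫ ω, exp (-(l * Y ω)) ∂P)) := by
  simp_rw [ofReal_div_add_pow_eq_lintegral (hX₀ _) (hY₀ _) k]
  rw [lintegral_lintegral_swap (by fun_prop)]
  refine setLIntegral_congr_fun measurableSet_Ioi fun l hl => ?_
  have hl : 0 < l := hl
  have hint : Integrable (fun ω => X ω ^ (k + 1) * exp (-(l * X ω)) * exp (-(l * Y ω))) P := by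
    refine (integrable_pow_mul_exp_neg_mul hX hX₀ (k + 1) hl).mono' (by fun_prop)
      (ae_of_all _ fun ω => ?_)
    have := hX₀ ω
    rw [Real.norm_of_nonneg (by positivity)]
    exact mul_le_of_le_one_right (by positivity) (exp_neg_mul_le_one hl.le (hY₀ ω))
  have hf : Measurable fun x : ℝ => x ^ (k + 1) * exp (-(l * x)) := by fun_prop
  have hg : Measurable fun y : ℝ => exp (-(l * y)) := by fun_prop
  have hindep := (hXY.comp hf hg).integral_fun_mul_eq_mul_integral
    (hf.comp hX).aestronglyMeasurable (hg.comp hY).aestronglyMeasurable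
  rw [← ofReal_integral_eq_lintegral_ofReal (hint.const_mul _) (ae_of_all _ fun ω => by
    have := hX₀ ω
    positivity), integral_const_mul]
  exact congrArg (fun t => ENNReal.ofReal (l ^ k / k ! * t)) hindep

lemma ae_ne_zero_of_tendsto_integral_exp_neg [IsFiniteMeasure P] (hX : Measurable X)
    (hX₀ : ∀ ω, 0 ≤ X ω) (h : Tendsto (fun l => ∫ ω, exp (-(l * X ω)) ∂P) atTop (𝓝 0)) :
    ∀ᵐ ω ∂P, X ω ≠ 0 := by
  have hmeas : MeasurableSet {ω | X ω = 0} := hX (measurableSet_singleton 0)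
  have hle : ∀ l > 0, P {ω | X ω = 0} ≤ ENNReal.ofReal (∫ ω, exp (-(l * X ω)) ∂P) := by
    intro l hl
    rw [ofReal_integral_eq_lintegral_ofReal
      (by simpa using integrable_pow_mul_exp_neg_mul (ν := P) hX hX₀ 0 hl)
      (ae_of_all _ fun ω => (exp_pos _).le), ← lintegral_indicator_one hmeas]
    refine lintegral_mono fun ω => ?_
    by_cases hω : X ω = 0 <;> simp [hω]
  rw [ae_iff]
  simp_rw [not_not]
  refine le_antisymm (ge_of_tendsto (by simpa using ENNReal.tendsto_ofReal h) ?_) zero_le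
  filter_upwards [eventually_gt_atTop 0] with l hl using hle l hl

variable {ρ : Measure ℝ} {a c p q : ℝ}

lemma integral_mul_exp_neg_of_laplace [IsFiniteMeasure P]
    (h₁ : IntegrableOn (fun s => s) (Ioi 0) ρ) (hX : Measurable X) (hX₀ : ∀ ω, 0 ≤ X ω)
    (hL : ∀ l, 0 < l → ∫ ω, exp (-(l * X ω)) ∂P = exp (-(c * laplaceExponent ρ l)))
    {l : ℝ} (hl : 0 < l) :
    ∫ ω, X ω * exp (-(l * X ω)) ∂P = firstMomentDensity ρ c l := by
  have hd := hasDerivAt_integral_pow_mul_exp_neg hX (ae_of_all _ hX₀) 0 (half_lt_self hl)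
    (integrable_pow_mul_exp_neg_mul (ν := P) hX hX₀ 0 (half_pos hl))
    (integrable_pow_mul_exp_neg_mul (ν := P) hX hX₀ 1 (half_pos hl))
  have heq : (fun x => exp (-(c * laplaceExponent ρ x)))
      =ᶠ[𝓝 l] fun x => ∫ ω, X ω ^ 0 * exp (-(x * X ω)) ∂P := by
    filter_upwards [Ioi_mem_nhds hl] with x hx
    simp [hL x hx]
  simpa using (hd.congr_of_eventuallyEq heq).unique (hasDerivAt_exp_neg_mul_laplaceExponent h₁ hl)

lemma integral_sq_mul_exp_neg_of_laplace [IsFiniteMeasure P]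
    (h₁ : IntegrableOn (fun s => s) (Ioi 0) ρ) (h₂ : IntegrableOn (fun s => s ^ 2) (Ioi 0) ρ)
    (hX : Measurable X) (hX₀ : ∀ ω, 0 ≤ X ω)
    (hL : ∀ l, 0 < l → ∫ ω, exp (-(l * X ω)) ∂P = exp (-(c * laplaceExponent ρ l)))
    {l : ℝ} (hl : 0 < l) :
    ∫ ω, X ω ^ 2 * exp (-(l * X ω)) ∂P
      = (c * tiltedMoment ρ 2 l + (c * tiltedMoment ρ 1 l) ^ 2)
        * exp (-(c * laplaceExponent ρ l)) := by
  have hd := hasDerivAt_integral_pow_mul_exp_neg hX (ae_of_all _ hX₀) 1 (half_lt_self hl)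
    (integrable_pow_mul_exp_neg_mul (ν := P) hX hX₀ 1 (half_pos hl))
    (integrable_pow_mul_exp_neg_mul (ν := P) hX hX₀ 2 (half_pos hl))
  have heq : firstMomentDensity ρ c =ᶠ[𝓝 l] fun x => ∫ ω, X ω ^ 1 * exp (-(x * X ω)) ∂P := by
    filter_upwards [Ioi_mem_nhds hl] with x hx
    simp [integral_mul_exp_neg_of_laplace h₁ hX hX₀ hL hx]
  have hR := ((hasDerivAt_tiltedMoment (k := 1) (by simpa using h₁) h₂ hl).const_mul c).mul
    (hasDerivAt_exp_neg_mul_laplaceExponent (a := c) h₁ hl)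
  have := (hd.congr_of_eventuallyEq heq).unique hR
  unfold firstMomentDensity at this
  linear_combination -this

lemma integral_div_add_of_laplace [IsFiniteMeasure P] (h₁ : IntegrableOn (fun s => s) (Ioi 0) ρ)
    (hρ : ρ (Ioi 0) = ⊤) (ha : 0 < a) (hp : 0 ≤ p) (hpq : p + q = 1)
    (hX : Measurable X) (hY : Measurable Y) (hX₀ : ∀ ω, 0 ≤ X ω) (hY₀ : ∀ ω, 0 ≤ Y ω)
    (hXY : IndepFun X Y P)
    (hLX : ∀ l, 0 < l → ∫ ω, exp (-(l * X ω)) ∂P = exp (-(a * p * laplaceExponent ρ l)))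
    (hLY : ∀ l, 0 < l → ∫ ω, exp (-(l * Y ω)) ∂P = exp (-(a * q * laplaceExponent ρ l))) :
    ∫ ω, X ω / (X ω + Y ω) ∂P = p := by
  obtain ⟨hint, hone⟩ := integrableOn_firstMomentDensity_and_integral_eq_one h₁ hρ ha
  have hlin := lintegral_ofReal_div_add_pow hX hY hX₀ hY₀ hXY 0
  rw [setLIntegral_congr_fun measurableSet_Ioi
      (g := fun l => ENNReal.ofReal (p * firstMomentDensity ρ a l)) fun l hl => by
    simp only [pow_zero, zero_add, pow_one, Nat.factorial_zero, Nat.cast_one, div_one, one_mul]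
    rw [integral_mul_exp_neg_of_laplace h₁ hX hX₀ hLX hl, hLY l hl, firstMomentDensity,
      firstMomentDensity, ← exp_neg_mul_mul_exp_neg_mul (a := a) hpq (laplaceExponent ρ l)]
    ring_nf,
    ← ofReal_integral_eq_lintegral_ofReal (hint.const_mul p)
      (ae_of_all _ fun l => mul_nonneg hp (firstMomentDensity_nonneg ha.le l)),
    integral_const_mul, hone, mul_one, zero_add] at hlin
  simp only [pow_one] at hlin
  rw [integral_eq_lintegral_of_nonneg_ae (ae_of_all _ fun ω => div_nonneg (hX₀ ω)
    (add_nonneg (hX₀ ω) (hY₀ ω))) (hX.div (hX.add hY)).aestronglyMeasurable, hlin,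
    ENNReal.toReal_ofReal hp]

lemma integral_div_add_sq_of_laplace [IsFiniteMeasure P]
    (h₁ : IntegrableOn (fun s => s) (Ioi 0) ρ) (h₂ : IntegrableOn (fun s => s ^ 2) (Ioi 0) ρ)
    (hρ : ρ (Ioi 0) = ⊤) (ha : 0 < a) (hp : 0 ≤ p) (hq : 0 ≤ q) (hpq : p + q = 1)
    (hX : Measurable X) (hY : Measurable Y) (hX₀ : ∀ ω, 0 ≤ X ω) (hY₀ : ∀ ω, 0 ≤ Y ω)
    (hXY : IndepFun X Y P)
    (hLX : ∀ l, 0 < l → ∫ ω, exp (-(l * X ω)) ∂P = exp (-(a * p * laplaceExponent ρ l)))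
    (hLY : ∀ l, 0 < l → ∫ ω, exp (-(l * Y ω)) ∂P = exp (-(a * q * laplaceExponent ρ l))) :
    ∫ ω, (X ω / (X ω + Y ω)) ^ 2 ∂P = p ^ 2 + p * q * varianceFactor ρ a := by
  set g := fun l => p ^ 2 * secondMomentDensity ρ a l
    + p * q * (a * (l * exp (-(a * laplaceExponent ρ l)) * tiltedMoment ρ 2 l))
  have hdens := (integrableOn_secondMomentDensity h₁ h₂ hρ ha).const_mul (p ^ 2)
  have hf := ((integrableOn_mul_exp_neg_mul_tiltedMoment_two h₁ h₂ hρ ha).const_mul a).const_mul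
    (p * q)
  have hg_int : IntegrableOn g (Ioi 0) := hdens.add hf
  have hg_val : ∫ l in Ioi 0, g l = p ^ 2 + p * q * varianceFactor ρ a := by
    rw [integral_add hdens hf, integral_const_mul, integral_const_mul, integral_const_mul,
      integral_Ioi_secondMomentDensity h₁ h₂ hρ ha le_rfl, varianceFactor]
    simp
  have hg_nonneg : ∀ l ∈ Ioi (0 : ℝ), 0 ≤ g l := fun l hl => by
    have := secondMomentDensity_nonneg (ρ := ρ) ha.le (le_of_lt hl)
    have := tiltedMoment_nonneg (ρ := ρ) 2 l
    have : 0 ≤ l := le_of_lt hl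
    positivity
  have hlin := lintegral_ofReal_div_add_pow hX hY hX₀ hY₀ hXY 1
  rw [setLIntegral_congr_fun measurableSet_Ioi (g := fun l => ENNReal.ofReal (g l)) fun l hl => by
    simp only [pow_one, Nat.factorial_one, Nat.cast_one, div_one, one_add_one_eq_two]
    rw [integral_sq_mul_exp_neg_of_laplace h₁ h₂ hX hX₀ hLX hl, hLY l hl]
    dsimp only [g]
    rw [secondMomentDensity,
      ← exp_neg_mul_mul_exp_neg_mul (a := a) hpq (laplaceExponent ρ l)]
    congr 1
    linear_combination (-(p * a * tiltedMoment ρ 2 l * l * exp (-(a * p * laplaceExponent ρ l))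
      * exp (-(a * q * laplaceExponent ρ l)))) * hpq,
    ← ofReal_integral_eq_lintegral_ofReal hg_int
      ((ae_restrict_iff' measurableSet_Ioi).2 (ae_of_all _ hg_nonneg)), hg_val,
    one_add_one_eq_two] at hlin
  rw [integral_eq_lintegral_of_nonneg_ae (f := fun ω => (X ω / (X ω + Y ω)) ^ 2)
    (ae_of_all _ fun ω => sq_nonneg _) ((hX.div (hX.add hY)).pow_const 2).aestronglyMeasurable,
    hlin, ENNReal.toReal_ofReal (by have := varianceFactor_nonneg (ρ := ρ) ha.le; positivity)]

lemma variance_div_add_of_laplace [IsProbabilityMeasure P]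
    (h₁ : IntegrableOn (fun s => s) (Ioi 0) ρ) (h₂ : IntegrableOn (fun s => s ^ 2) (Ioi 0) ρ)
    (hρ : ρ (Ioi 0) = ⊤) (ha : 0 < a) (hp : 0 ≤ p) (hq : 0 ≤ q) (hpq : p + q = 1)
    (hX : Measurable X) (hY : Measurable Y) (hX₀ : ∀ ω, 0 ≤ X ω) (hY₀ : ∀ ω, 0 ≤ Y ω)
    (hXY : IndepFun X Y P)
    (hLX : ∀ l, 0 < l → ∫ ω, exp (-(l * X ω)) ∂P = exp (-(a * p * laplaceExponent ρ l)))
    (hLY : ∀ l, 0 < l → ∫ ω, exp (-(l * Y ω)) ∂P = exp (-(a * q * laplaceExponent ρ l))) :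
    variance (fun ω => X ω / (X ω + Y ω)) P = p * q * varianceFactor ρ a := by
  have hbound : ∀ ω, ‖X ω / (X ω + Y ω)‖ ≤ 1 := fun ω => by
    have := hX₀ ω
    have := hY₀ ω
    rw [Real.norm_of_nonneg (by positivity)]
    exact div_le_one_of_le₀ (by linarith) (by positivity)
  rw [variance_eq_sub (MemLp.of_bound (f := fun ω => X ω / (X ω + Y ω))
    (hX.div (hX.add hY)).aestronglyMeasurable 1 (ae_of_all _ hbound))]
  simp only [Pi.pow_apply]
  rw [integral_div_add_sq_of_laplace h₁ h₂ hρ ha hp hq hpq hX hY hX₀ hY₀ hXY hLX hLY,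
    integral_div_add_of_laplace h₁ hρ ha hp hpq hX hY hX₀ hY₀ hXY hLX hLY]
  ring

end RandomVariables

section CompletelyRandomMeasure

variable {Ω E : Type*} [MeasurableSpace Ω] [MeasurableSpace E] {P : Measure Ω}

lemma indepFun_toReal_measure_compl {μ : Ω → Measure E}
    (hindep : ∀ (m : ℕ) (B : Fin m → Set E), (∀ i, MeasurableSet (B i)) →
      Pairwise (Function.onFun Disjoint B) → iIndepFun (fun i ω => ((μ ω) (B i)).toReal) P)
    {A : Set E} (hA : MeasurableSet A) :
    IndepFun (fun ω => ((μ ω) A).toReal) (fun ω => ((μ ω) Aᶜ).toReal) P := by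
  have hB : ∀ i, MeasurableSet (![A, Aᶜ] i) := Fin.forall_fin_two.2 ⟨hA, hA.compl⟩
  have hdisj : Pairwise (Function.onFun Disjoint ![A, Aᶜ]) := by
    intro i j hij
    fin_cases i <;> fin_cases j
    all_goals first
      | exact absurd rfl hij
      | simpa [Function.onFun] using disjoint_compl_right
      | simpa [Function.onFun] using disjoint_compl_left
  simpa using (hindep 2 ![A, Aᶜ] hB hdisj).indepFun (i := 0) (j := 1) (by decide)

lemma toReal_measure_univ_eq_add {m : Measure E} {A : Set E} (hA : MeasurableSet A)
    (h : (m univ).toReal ≠ 0) : (m univ).toReal = (m A).toReal + (m Aᶜ).toReal := by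
  have hfin : m univ ≠ ⊤ := fun htop => h (by simp [htop])
  rw [← measure_add_measure_compl hA, ENNReal.toReal_add
    (ne_top_of_le_ne_top hfin (measure_mono (subset_univ _)))
    (ne_top_of_le_ne_top hfin (measure_mono (subset_univ _)))]

end CompletelyRandomMeasure

end NRMI

open NRMI

/-- Mean and variance of an hNRMI `P_a(A) = μ̃_a(A)/μ̃_a(X)`:
`E[P_a(A)] = H(A)`, `Var(P_a(A)) = H(A)(1−H(A)) I_a` with
`I_a = a∫_0^∞ λ exp(−a∫_0^∞(1−e^{−λs})ρ(ds)) (∫_0^∞ s²e^{−λs}ρ(ds)) dλ`,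
and `I_a = O(1/a)` as `a → ∞`. -/
theorem hNRMI_mean_variance
    {Ω X : Type*} [MeasurableSpace Ω] [MeasurableSpace X]
    (P : Measure Ω) [IsProbabilityMeasure P]
    (H : Measure X) [IsProbabilityMeasure H] (ρ : Measure ℝ)
    (hmin : ∫⁻ s in Ioi (0 : ℝ), ENNReal.ofReal (min s 1) ∂ρ < ⊤)
    (hρinf : ρ (Ioi (0 : ℝ)) = ⊤)
    (htail₂ : ∫⁻ s in Ici (1 : ℝ), ENNReal.ofReal (s ^ 2) ∂ρ < ⊤)
    (μ : ℝ → Ω → Measure X)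
    (hmeas : ∀ (a : ℝ) (B : Set X), MeasurableSet B →
      Measurable fun ω => ((μ a ω) B).toReal)
    (hLaplace : ∀ (a : ℝ), 0 < a → ∀ B : Set X, MeasurableSet B → ∀ l : ℝ, 0 ≤ l →
      ∫ ω, exp (-(l * ((μ a ω) B).toReal)) ∂P
        = exp (-(a * (H B).toReal * ∫ s in Ioi (0 : ℝ), (1 - exp (-(l * s))) ∂ρ)))
    (hindep : ∀ (a : ℝ) (m : ℕ) (B : Fin m → Set X), (∀ i, MeasurableSet (B i)) →
      Pairwise (Function.onFun Disjoint B) →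
      ProbabilityTheory.iIndepFun
        (fun i ω => ((μ a ω) (B i)).toReal) P)
    (I : ℝ → ℝ)
    (hI : ∀ a : ℝ, I a
      = a * ∫ l in Ioi (0 : ℝ),
          l * exp (-(a * ∫ s in Ioi (0 : ℝ), (1 - exp (-(l * s))) ∂ρ))
            * ∫ s in Ioi (0 : ℝ), s ^ 2 * exp (-(l * s)) ∂ρ) :
    (∀ a : ℝ, 0 < a → ∀ A : Set X, MeasurableSet A →
      (∫ ω, ((μ a ω) A).toReal / ((μ a ω) univ).toReal ∂P = (H A).toReal) ∧
      ProbabilityTheory.variance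
          (fun ω => ((μ a ω) A).toReal / ((μ a ω) univ).toReal) P
        = (H A).toReal * (1 - (H A).toReal) * I a) ∧
    (∃ C a₀ : ℝ, 0 < C ∧ ∀ a : ℝ, a₀ ≤ a → |I a| ≤ C / a) := by
  have h₁ := integrableOn_self_of_lintegral_min_lt_top hmin htail₂
  have h₂ := integrableOn_sq_of_lintegral_min_lt_top hmin htail₂
  obtain rfl : I = varianceFactor ρ := funext hI
  refine ⟨fun a ha A hA => ?_, exists_varianceFactor_le_div h₁ h₂ hρinf⟩
  have hL : ∀ B, MeasurableSet B → ∀ l : ℝ, 0 < l → ∫ ω, exp (-(l * ((μ a ω) B).toReal)) ∂P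
      = exp (-(a * (H B).toReal * laplaceExponent ρ l)) := fun B hB l hl =>
    hLaplace a ha B hB l hl.le
  have hq : (H Aᶜ).toReal = 1 - (H A).toReal := probReal_compl_eq_one_sub hA
  have hpq : (H A).toReal + (H Aᶜ).toReal = 1 := by rw [hq]; ring
  have h₀ : ∀ B ω, 0 ≤ ((μ a ω) B).toReal := fun _ _ => ENNReal.toReal_nonneg
  have hT : ∀ᵐ ω ∂P, ((μ a ω) univ).toReal ≠ 0 := by
    refine ae_ne_zero_of_tendsto_integral_exp_neg (hmeas a univ .univ) (h₀ univ)
      ((tendsto_exp_neg_mul_laplaceExponent_atTop h₁ hρinf ha).congr' ?_)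
    filter_upwards [eventually_gt_atTop 0] with l hl
    simp [hL univ .univ l hl]
  have hratio : (fun ω => ((μ a ω) A).toReal / ((μ a ω) univ).toReal) =ᵐ[P]
      fun ω => ((μ a ω) A).toReal / (((μ a ω) A).toReal + ((μ a ω) Aᶜ).toReal) := by
    filter_upwards [hT] with ω hω
    rw [toReal_measure_univ_eq_add hA hω]
  have hXY := indepFun_toReal_measure_compl (hindep a) hA
  have hX := hmeas a A hA
  have hY := hmeas a Aᶜ hA.compl
  rw [integral_congr_ae hratio, variance_congr hratio, ← hq]
  exact ⟨integral_div_add_of_laplace h₁ hρinf ha ENNReal.toReal_nonneg hpq hX hY (h₀ A) (h₀ Aᶜ)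
      hXY (hL A hA) (hL Aᶜ hA.compl),
    variance_div_add_of_laplace h₁ h₂ hρinf ha ENNReal.toReal_nonneg ENNReal.toReal_nonneg hpq
      hX hY (h₀ A) (h₀ Aᶜ) hXY (hL A hA) (hL Aᶜ hA.compl)⟩
end

section
/- Suppose F_a, G are distribution functions on ℝ such that sup_t |F_a(t) − G(t)| ≤ C/√a, G is the distribution function of a Gaussian with bounded density, and V_a satisfies P(|V_a − 1| > 1/√a) ≤ C'/√a. If W_a = X_a/V_a with X_a having distribution function F_a, then sup_{t>0} |P(W_a ≤ t) − G(t)| ≤ C''/√a for a constant C'' depending on C, C' and the Gaussian density bound. -/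
/-!
Put `s = 1 / √a`. Off the event `s < |V_a - 1|`, whose probability is at most `C' / √a`, the
event `X_a / V_a ≤ t` lies between `X_a ≤ t (1 - s)` and `X_a ≤ t (1 + s)`. Replacing the law of
`X_a` by the Gaussian costs `C / √a`, and moving the Gaussian CDF from `t (1 ± s)` back to `t`
costs `O(s)`: the density `g` satisfies `|x| g(x) ≤ K`, so the CDF increases by at most
`K (b - a) / a` on `[a, b] ⊆ (0, ∞)`.
For `a < 4` the bound is trivial, both probabilities lying in `[0, 1]`.
-/

open MeasureTheory Set Filter ProbabilityTheory

open Real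
open scoped NNReal

lemma abs_mul_exp_neg_sq_div_le {c : ℝ} (hc : 0 < c) (u : ℝ) :
    |u| * exp (-u ^ 2 / c) ≤ √c := by
  -- `w ≤ 1 + w ^ 2 ≤ exp (w ^ 2)` for `w = |u| / √c`
  have hlin : |u| ≤ √c * (u ^ 2 / c + 1) := by
    have hc' : 0 < √c := sqrt_pos.2 hc
    have hsq : √c ^ 2 = c := sq_sqrt hc.le
    have hquad : |u| * √c ≤ u ^ 2 + c := by nlinarith [sq_nonneg (|u| - √c), sq_abs u]
    calc |u| = |u| * √c / √c := by field_simp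
      _ ≤ (u ^ 2 + c) / √c := by gcongr
      _ = √c * (u ^ 2 / c + 1) := by field_simp; rw [hsq]
  calc |u| * exp (-u ^ 2 / c)
      ≤ √c * exp (u ^ 2 / c) * exp (-u ^ 2 / c) := by
        gcongr
        exact hlin.trans (mul_le_mul_of_nonneg_left (add_one_le_exp _) (sqrt_nonneg c))
    _ = √c := by rw [mul_assoc, ← exp_add, neg_div, add_neg_cancel, exp_zero, mul_one]

lemma abs_mul_gaussianPDFReal_le (m : ℝ) {v : ℝ≥0} (hv : v ≠ 0) (x : ℝ) :
    |x| * gaussianPDFReal m v x ≤ (√(2 * π * v))⁻¹ * (√(2 * v) + |m|) := by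
  have hv' : (0 : ℝ) < 2 * v := by positivity
  set e := exp (-(x - m) ^ 2 / (2 * v))
  have he : e ≤ 1 := exp_le_one_iff.2 (div_nonpos_of_nonpos_of_nonneg (by nlinarith) hv'.le)
  have hx : |x| * e ≤ √(2 * v) + |m| :=
    calc |x| * e ≤ (|x - m| + |m|) * e := by
          gcongr
          simpa using abs_add_le (x - m) m
      _ ≤ √(2 * v) + |m| * 1 := by
          rw [add_mul]
          gcongr
          exact abs_mul_exp_neg_sq_div_le hv' (x - m)
      _ = √(2 * v) + |m| := by rw [mul_one]
  calc |x| * gaussianPDFReal m v x = (√(2 * π * v))⁻¹ * (|x| * e) := by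
        rw [gaussianPDFReal]; ring
    _ ≤ _ := by gcongr

lemma exists_cdf_gaussianReal_sub_le (m : ℝ) {v : ℝ≥0} (hv : v ≠ 0) :
    ∃ K, 0 ≤ K ∧ ∀ a b : ℝ, 0 < a → a ≤ b →
      cdf (gaussianReal m v) b - cdf (gaussianReal m v) a ≤ (b - a) * (K / a) := by
  set K := (√(2 * π * v))⁻¹ * (√(2 * v) + |m|)
  refine ⟨K, by positivity, fun a b ha hab => ?_⟩
  have hpdf : ∀ x ∈ Ioc a b, gaussianPDFReal m v x ≤ K / a :=
    fun x hx => by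
      rw [le_div_iff₀ ha]
      calc gaussianPDFReal m v x * a ≤ |x| * gaussianPDFReal m v x := by
            rw [mul_comm]
            gcongr
            · exact gaussianPDFReal_nonneg m v x
            · exact hx.1.le.trans (le_abs_self x)
        _ ≤ _ := abs_mul_gaussianPDFReal_le m hv x
  have hIoc : cdf (gaussianReal m v) b - cdf (gaussianReal m v) a
      = ∫ x in Ioc a b, gaussianPDFReal m v x := by
    rw [← ENNReal.toReal_ofReal (sub_nonneg.2 (monotone_cdf _ hab)),
      ← StieltjesFunction.measure_Ioc, measure_cdf, gaussianReal_apply_eq_integral m hv,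
      ENNReal.toReal_ofReal
        (setIntegral_nonneg measurableSet_Ioc fun x _ => gaussianPDFReal_nonneg m v x)]
  rw [hIoc, ← Real.volume_real_Ioc_of_le hab, ← smul_eq_mul, ← setIntegral_const]
  exact setIntegral_mono_on (integrable_gaussianPDFReal m v).restrict (integrable_const _)
    measurableSet_Ioc hpdf

lemma exists_cdf_gaussianReal_scale_le (m : ℝ) {v : ℝ≥0} (hv : v ≠ 0) :
    ∃ L, 0 ≤ L ∧ ∀ t : ℝ, 0 < t → ∀ s : ℝ, 0 ≤ s → s ≤ 1 / 2 →
      cdf (gaussianReal m v) (t * (1 + s)) - cdf (gaussianReal m v) t ≤ L * s ∧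
      cdf (gaussianReal m v) t - cdf (gaussianReal m v) (t * (1 - s)) ≤ L * s := by
  obtain ⟨K, hK, hcdf⟩ := exists_cdf_gaussianReal_sub_le m hv
  refine ⟨2 * K, by positivity, fun t ht s hs0 hs => ⟨?_, ?_⟩⟩
  · calc _ ≤ (t * (1 + s) - t) * (K / t) := hcdf t _ ht (by nlinarith)
      _ = K * s := by field_simp; ring
      _ ≤ 2 * K * s := by nlinarith
  · calc _ ≤ (t - t * (1 - s)) * (K / (t * (1 - s))) := hcdf _ t (by nlinarith) (by nlinarith)
      _ = K * s / (1 - s) := by field_simp; ring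
      _ ≤ 2 * K * s := by rw [div_le_iff₀ (by linarith)]; nlinarith [mul_nonneg hK hs0]

section Transfer

variable {Ω : Type*} (X V : Ω → ℝ) {t s : ℝ}

lemma setOf_div_le_subset (ht : 0 ≤ t) (hs : s < 1) :
    {ω | X ω / V ω ≤ t} ⊆ {ω | X ω ≤ t * (1 + s)} ∪ {ω | s < |V ω - 1|} := by
  intro ω hω
  by_cases hV : s < |V ω - 1|
  · exact Or.inr hV
  · have hV := abs_le.1 (not_lt.1 hV)
    have hX : X ω ≤ t * V ω := (div_le_iff₀ (by linarith)).1 hω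
    exact Or.inl (hX.trans (by gcongr; linarith))

lemma setOf_le_subset_div (ht : 0 ≤ t) (hs : s < 1) :
    {ω | X ω ≤ t * (1 - s)} ⊆ {ω | X ω / V ω ≤ t} ∪ {ω | s < |V ω - 1|} := by
  intro ω hω
  by_cases hV : s < |V ω - 1|
  · exact Or.inr hV
  · have hV := abs_le.1 (not_lt.1 hV)
    refine Or.inl ((div_le_iff₀ (show 0 < V ω by linarith)).2 (le_trans hω ?_))
    gcongr
    linarith

lemma abs_measureReal_div_le_sub_le [MeasurableSpace Ω] (P : Measure Ω) [IsFiniteMeasure P]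
    (G : ℝ → ℝ) {δ η ε : ℝ} (ht : 0 ≤ t) (hs : s < 1)
    (hX : ∀ u, |P.real {ω | X ω ≤ u} - G u| ≤ δ) (hV : P.real {ω | s < |V ω - 1|} ≤ η)
    (hG_up : G (t * (1 + s)) - G t ≤ ε) (hG_down : G t - G (t * (1 - s)) ≤ ε) :
    |P.real {ω | X ω / V ω ≤ t} - G t| ≤ δ + η + ε := by
  have hup := (measureReal_mono (μ := P) (setOf_div_le_subset X V ht hs)).trans
    (measureReal_union_le _ _)
  have hdown := (measureReal_mono (μ := P) (setOf_le_subset_div X V ht hs)).trans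
    (measureReal_union_le _ _)
  have hX_up := abs_le.1 (hX (t * (1 + s)))
  have hX_down := abs_le.1 (hX (t * (1 - s)))
  rw [abs_le]
  constructor <;> linarith

end Transfer

theorem berry_esseen_transfer_general
    {Ω : Type*} [MeasurableSpace Ω] (P : Measure Ω) [IsProbabilityMeasure P]
    (m : ℝ) (v : NNReal) (hv : v ≠ 0)
    (G : ℝ → ℝ) (hG : ∀ t, G t = ((gaussianReal m v) (Iic t)).toReal)
    (X V : ℝ → Ω → ℝ)
    (C C' : ℝ) (hC : 0 < C) (hC' : 0 < C')
    (hBE : ∀ a : ℝ, 0 < a → ∀ t : ℝ,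
      |(P {ω | X a ω ≤ t}).toReal - G t| ≤ C / Real.sqrt a)
    (hconc : ∀ a : ℝ, 0 < a →
      (P {ω | 1 / Real.sqrt a < |V a ω - 1|}).toReal ≤ C' / Real.sqrt a) :
    ∃ C'' : ℝ, 0 < C'' ∧ ∀ a : ℝ, 0 < a → ∀ t : ℝ, 0 < t →
      |(P {ω | X a ω / V a ω ≤ t}).toReal - G t| ≤ C'' / Real.sqrt a := by
  have hG_cdf : G = cdf (gaussianReal m v) := funext fun t => by rw [hG, cdf_eq_real]; rfl
  obtain ⟨L, hL, hscale⟩ := exists_cdf_gaussianReal_scale_le m hv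
  refine ⟨C + C' + L + 2, by positivity, fun a ha t ht => ?_⟩
  have hsa : 0 < √a := sqrt_pos.2 ha
  rcases lt_or_ge a 4 with ha4 | ha4
  · have hsa2 : √a < 2 := (sqrt_lt' two_pos).2 (by linarith)
    calc |(P {ω | X a ω / V a ω ≤ t}).toReal - G t| ≤ 1 :=
          abs_sub_le_of_nonneg_of_le measureReal_nonneg measureReal_le_one
            (hG_cdf ▸ cdf_nonneg _ t) (hG_cdf ▸ cdf_le_one _ t)
      _ ≤ 2 / √a := by rw [le_div_iff₀ hsa]; linarith
      _ ≤ (C + C' + L + 2) / √a := by gcongr; linarith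
  · have hs : 1 / √a ≤ 1 / 2 := by
      gcongr
      exact (le_sqrt' two_pos).2 (by linarith)
    obtain ⟨hG_up, hG_down⟩ := hG_cdf ▸ hscale t ht (1 / √a) (by positivity) hs
    calc |(P {ω | X a ω / V a ω ≤ t}).toReal - G t|
        ≤ C / √a + C' / √a + L * (1 / √a) :=
          abs_measureReal_div_le_sub_le (X a) (V a) P G ht.le (by linarith) (hBE a ha)
            (hconc a ha) hG_up hG_down
      _ ≤ (C + C' + L + 2) / √a := by
          rw [mul_one_div, ← add_div, ← add_div]
          exact div_le_div_of_nonneg_right (by linarith) hsa.le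

/-- Berry–Esseen transfer: if `sup_t |F_a(t) − G(t)| ≤ C/√a` where `F_a` is the CDF of
`X_a` and `G` is a Gaussian CDF, and `P(|V_a − 1| > 1/√a) ≤ C'/√a`, then the
self-normalized statistic `W_a = X_a/V_a` satisfies
`sup_{t>0} |P(W_a ≤ t) − G(t)| ≤ C''/√a` for some constant `C''`. -/
theorem berry_esseen_transfer
    {Ω : Type*} [MeasurableSpace Ω] (P : Measure Ω) [IsProbabilityMeasure P]
    (m : ℝ) (v : NNReal) (hv : v ≠ 0)
    (G : ℝ → ℝ) (hG : ∀ t, G t = ((gaussianReal m v) (Iic t)).toReal)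
    (X V : ℝ → Ω → ℝ) (hVpos : ∀ a, ∀ᵐ ω ∂P, 0 < V a ω)
    (C C' : ℝ) (hC : 0 < C) (hC' : 0 < C')
    (hBE : ∀ a : ℝ, 0 < a → ∀ t : ℝ,
      |(P {ω | X a ω ≤ t}).toReal - G t| ≤ C / Real.sqrt a)
    (hconc : ∀ a : ℝ, 0 < a →
      (P {ω | 1 / Real.sqrt a < |V a ω - 1|}).toReal ≤ C' / Real.sqrt a) :
    ∃ C'' : ℝ, 0 < C'' ∧ ∀ a : ℝ, 0 < a → ∀ t : ℝ, 0 < t →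
      |(P {ω | X a ω / V a ω ≤ t}).toReal - G t| ≤ C'' / Real.sqrt a :=
  berry_esseen_transfer_general P m v hv G hG X V C C' hC hC' hBE hconc
end
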